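/- Suppose 𝒫 is a set of d-dimensional k-templates and X is an infinite set. If 𝒫 = ∅, then χ(L(X^d, 𝒫)) = 1. If 𝒫 ≠ ∅, then χ(L(X^d, 𝒫)) = |X|^{-(e − 1)}, where e = min{e(P) : P ∈ 𝒫}. -/

import Mathlib

/-- `Q` is a homomorphic image of the `d`-dimensional template `P`: there is an injective
map `f` from `P` onto `Q` such that whenever `x, y ∈ P` agree in coordinate `i`, so do
`f x` and `f y`. -/
def IsHomImage {d : ℕ} {α β : Type} (P : Set (Fin d → α)) (Q : Set (Fin d → β)) : Prop :=
  ∃ f : (Fin d → α) → (Fin d → β), Set.InjOn f P ∧ Q = f '' P ∧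
    ∀ x ∈ P, ∀ y ∈ P, ∀ i : Fin d, x i = y i → f x i = f y i

/-- The edge set of the multi-template hypergraph `L(V^d, 𝓟)`: the edges are those subsets
of `V^d` that are homomorphic images of some template `P ∈ 𝓟`. -/
def multiTemplateEdges {d : ℕ} {α : Type} (V : Type) (𝓟 : Set (Set (Fin d → α))) :
    Set (Set (Fin d → V)) :=
  {Q | ∃ P ∈ 𝓟, IsHomImage P Q}

/-- `φ` is a proper coloring of the hypergraph with edge set `E`: no edge is monochromatic. -/
def IsProperColoring {V C : Type*} (E : Set (Set V)) (φ : V → C) : Prop :=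
  ∀ s ∈ E, ∃ x ∈ s, ∃ y ∈ s, φ x ≠ φ y

/-- The chromatic number of the hypergraph with vertex set `V` and edge set `E`: the least
cardinal `κ` such that there is a proper coloring with `κ` colors. -/
noncomputable def chrNum {V : Type} (E : Set (Set V)) : Cardinal :=
  sInf {κ : Cardinal | ∃ (C : Type) (φ : V → C), Cardinal.mk C = κ ∧ IsProperColoring E φ}

/-- `κ⁺ᵈ`, the `d`-fold cardinal successor of `κ`. -/
noncomputable def cardPlus (κ : Cardinal) (d : ℕ) : Cardinal := (Order.succ)^[d] κ

/-- `κ⁻ᵈ`, the least cardinal `μ` with `μ⁺ᵈ ≥ κ`. -/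
noncomputable def cardMinus (κ : Cardinal) (d : ℕ) : Cardinal :=
  sInf {μ : Cardinal | κ ≤ cardPlus μ d}

/-- The induced subhypergraph `H[X]`: vertex set `X`, edges the edges of `H` contained
in `X`. -/
def inducedEdges {V : Type} (E : Set (Set V)) (X : Set V) : Set (Set X) :=
  {s | (Subtype.val '' s) ∈ E}

/-- `I` is a distinguisher for the template `P`: any two distinct elements of `P` differ in
some coordinate in `I`. -/
def IsDistinguisher {d : ℕ} {α : Type} (P : Set (Fin d → α)) (I : Set (Fin d)) : Prop :=
  ∀ x ∈ P, ∀ y ∈ P, x ≠ y → ∃ i ∈ I, x i ≠ y i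

/-- `e(P)`, the least cardinality of a distinguisher for the template `P`. -/
noncomputable def eTemplate {d : ℕ} {α : Type} (P : Set (Fin d → α)) : ℕ :=
  sInf {m : ℕ | ∃ I : Set (Fin d), I.ncard = m ∧ IsDistinguisher P I}

/-! Upper bound: if `μ` is infinite and `|X| ≤ μ^{+n}`, then `X^d` has a colouring with `μ`
colours each of whose classes has a distinguisher of size `n`, by induction on `n`: colour a
point by the position of its largest coordinate and, recursively, by its other coordinates, which
lie below that maximum and so range over a set of size `μ^{+(n-1)}`. No homomorphic image of a
template `P` with `e(P) > n` is then monochromatic.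

Lower bound: if `|C|^{+e} ≤ |X|`, every colouring of `X^e` by `C` is constant on a product of `e`
injective copies of any finite set (a polarized partition relation, proved coordinate by
coordinate with the pigeonhole principle). Placing such a product on a minimal distinguisher of a
template `P` with `e(P) = e` yields a monochromatic homomorphic image of `P`. -/

open Cardinal Set Function

theorem cardPlus_succ (κ : Cardinal) (n : ℕ) : cardPlus κ (n + 1) = Order.succ (cardPlus κ n) :=
  iterate_succ_apply' _ _ _

theorem le_cardPlus (κ : Cardinal) (n : ℕ) : κ ≤ cardPlus κ n :=
  id_le_iterate_of_id_le Order.le_succ n κ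

theorem cardPlus_lt_aleph0 {κ : Cardinal} (hκ : κ < ℵ₀) (n : ℕ) : cardPlus κ n < ℵ₀ := by
  induction n with
  | zero => exact hκ
  | succ n ih => rw [cardPlus_succ]; exact isSuccLimit_aleph0.succ_lt ih

theorem le_cardPlus_cardMinus (κ : Cardinal) (n : ℕ) : κ ≤ cardPlus (cardMinus κ n) n :=
  csInf_mem (s := {μ | κ ≤ cardPlus μ n}) ⟨κ, le_cardPlus κ n⟩

theorem cardPlus_lt_of_lt_cardMinus {κ μ : Cardinal} {n : ℕ} (h : μ < cardMinus κ n) :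
    cardPlus μ n < κ :=
  not_le.1 (notMem_of_lt_csInf (s := {μ | κ ≤ cardPlus μ n}) h (OrderBot.bddBelow _))

theorem aleph0_le_cardMinus {κ : Cardinal} (hκ : ℵ₀ ≤ κ) (n : ℕ) : ℵ₀ ≤ cardMinus κ n :=
  not_lt.1 fun h => (cardPlus_lt_aleph0 h n).not_ge (hκ.trans (le_cardPlus_cardMinus κ n))

theorem mk_arrow_le {A Y : Type} [Finite A] {κ : Cardinal} (hκ : ℵ₀ ≤ κ) (hY : #Y ≤ κ) :
    #(A → Y) ≤ κ := by
  rw [mk_arrow, lift_id, lift_id]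
  exact (power_le_power_right hY).trans (pow_le hκ (lt_aleph0_of_finite A))

theorem exists_injective_fiber {Y C A : Type} (h : Y → C) (hcard : #C * #A < #Y) :
    ∃ y, ∃ s : A → Y, Injective s ∧ ∀ a, h (s a) = h y := by
  obtain ⟨⟨_, y, rfl⟩, hy⟩ : ∃ c : range h, #A ≤ #(rangeFactorization h ⁻¹' {c}) := by
    by_contra! hlt
    refine hcard.not_ge ?_
    calc #Y = sum fun c => #(rangeFactorization h ⁻¹' {c}) := by
          rw [← mk_sigma]; exact mk_congr (Equiv.sigmaFiberEquiv _).symm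
      _ ≤ sum fun _ : range h => #A := sum_le_sum _ _ fun c => (hlt c).le
      _ = #(range h) * #A := sum_const' _ _
      _ ≤ #C * #A := mul_le_mul_left (mk_set_le _) _
  obtain ⟨s⟩ := (le_def _ _).1 hy
  exact ⟨y, fun a => s a, fun a b hab => s.injective (Subtype.ext hab),
    fun a => congrArg Subtype.val (s a).2⟩

section Chromatic

variable {V : Type} {E : Set (Set V)}

theorem chrNum_le {C : Type} {φ : V → C} (hφ : IsProperColoring E φ) : chrNum E ≤ #C :=
  csInf_le' ⟨C, φ, rfl, hφ⟩

theorem le_chrNum {κ : Cardinal} (hE : ∃ (C : Type) (φ : V → C), IsProperColoring E φ)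
    (h : ∀ (C : Type) (φ : V → C), IsProperColoring E φ → κ ≤ #C) : κ ≤ chrNum E := by
  obtain ⟨C, φ, hφ⟩ := hE
  exact le_csInf ⟨_, C, φ, rfl, hφ⟩ fun _ ⟨C, φ, hC, hφ⟩ => hC ▸ h C φ hφ

theorem chrNum_empty [Nonempty V] : chrNum (∅ : Set (Set V)) = 1 := by
  have hproper {C : Type} (φ : V → C) : IsProperColoring ∅ φ := fun _ h => h.elim
  refine le_antisymm ((chrNum_le (hproper fun _ => PUnit.unit)).trans_eq mk_punit)
    (le_chrNum ⟨_, _, hproper fun _ => PUnit.unit⟩ fun C φ _ => ?_)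
  exact Cardinal.one_le_iff_ne_zero.2 (mk_ne_zero_iff.2 ⟨φ (Classical.arbitrary V)⟩)

end Chromatic

section Distinguisher

variable {d : ℕ} {α : Type} {P : Set (Fin d → α)} {I : Set (Fin d)}

theorem IsDistinguisher.of_subsingleton (hP : P.Subsingleton) (I : Set (Fin d)) :
    IsDistinguisher P I :=
  fun _ hx _ hy hxy => (hxy (hP hx hy)).elim

theorem IsDistinguisher.mono {Q : Set (Fin d → α)} (hI : IsDistinguisher Q I) (hPQ : P ⊆ Q) :
    IsDistinguisher P I :=
  fun x hx y hy => hI x (hPQ hx) y (hPQ hy)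

theorem IsDistinguisher.of_image {β : Type} {f : (Fin d → α) → (Fin d → β)} (hf : InjOn f P)
    (hhom : ∀ x ∈ P, ∀ y ∈ P, ∀ i, x i = y i → f x i = f y i)
    (hI : IsDistinguisher (f '' P) I) : IsDistinguisher P I := by
  intro x hx y hy hxy
  obtain ⟨i, hi, hne⟩ := hI _ (mem_image_of_mem f hx) _ (mem_image_of_mem f hy)
    fun h => hxy (hf hx hy h)
  exact ⟨i, hi, fun h => hne (hhom x hx y hy i h)⟩

theorem eTemplate_le_ncard (hI : IsDistinguisher P I) : eTemplate P ≤ I.ncard :=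
  Nat.sInf_le ⟨I, rfl, hI⟩

theorem exists_isDistinguisher_ncard_eq_eTemplate (P : Set (Fin d → α)) :
    ∃ I : Set (Fin d), I.ncard = eTemplate P ∧ IsDistinguisher P I :=
  Nat.sInf_mem (s := {m | ∃ I : Set (Fin d), I.ncard = m ∧ IsDistinguisher P I})
    ⟨_, univ, rfl, fun _ _ _ _ hxy => let ⟨i, hi⟩ := ne_iff.1 hxy; ⟨i, mem_univ i, hi⟩⟩

theorem eTemplate_pos (hP : P.Nontrivial) : 0 < eTemplate P := by
  obtain ⟨I, hIcard, hI⟩ := exists_isDistinguisher_ncard_eq_eTemplate P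
  obtain ⟨x, hx, y, hy, hxy⟩ := hP
  obtain ⟨i, hi, -⟩ := hI x hx y hy hxy
  exact hIcard ▸ (ncard_pos (toFinite I)).2 ⟨i, hi⟩

end Distinguisher

def IsDistinguishedColoring {d : ℕ} {X C : Type} (φ : (Fin d → X) → C) (n : ℕ) : Prop :=
  ∀ c, ∃ I : Set (Fin d), I.ncard ≤ n ∧ IsDistinguisher (φ ⁻¹' {c}) I

theorem isDistinguishedColoring_of_injective {d : ℕ} {X C : Type} {φ : (Fin d → X) → C}
    (hφ : Injective φ) (n : ℕ) : IsDistinguishedColoring φ n :=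
  fun _ => ⟨∅, by simp, .of_subsingleton (subsingleton_singleton.preimage hφ) ∅⟩

theorem IsDistinguishedColoring.isProperColoring {d : ℕ} {α X C : Type}
    {𝓟 : Set (Set (Fin d → α))} {φ : (Fin d → X) → C} {n : ℕ} (hφ : IsDistinguishedColoring φ n)
    (h𝓟 : ∀ P ∈ 𝓟, n < eTemplate P) : IsProperColoring (multiTemplateEdges X 𝓟) φ := by
  rintro _ ⟨P, hP, f, hf, rfl, hhom⟩
  by_contra! hmono
  obtain rfl | ⟨p, hp⟩ := P.eq_empty_or_nonempty
  · have hempty : IsDistinguisher (∅ : Set (Fin d → α)) ∅ := .of_subsingleton subsingleton_empty ∅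
    simpa using (h𝓟 ∅ hP).trans_le (eTemplate_le_ncard hempty)
  obtain ⟨I, hIn, hI⟩ := hφ (φ (f p))
  have hmem : f '' P ⊆ φ ⁻¹' {φ (f p)} := fun x hx => hmono x hx _ (mem_image_of_mem f hp)
  exact (h𝓟 P hP).not_ge ((eTemplate_le_ncard ((hI.mono hmem).of_image hf hhom)).trans hIn)

theorem exists_injOn_Iic {W L : Type} [LinearOrder W] (b : W) (h : #(Iio b) ≤ #L) :
    ∃ E : W → Option L, InjOn E (Iic b) := by
  obtain ⟨j⟩ := (le_def _ _).1 h
  refine ⟨fun w => if hw : w < b then some (j ⟨w, hw⟩) else none, fun u hu v hv huv => ?_⟩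
  by_cases hub : u < b <;> by_cases hvb : v < b <;> simp only [hub, hvb, dif_pos, dif_neg,
    not_false_eq_true, Option.some_inj, reduceCtorEq] at huv
  · exact congrArg Subtype.val (j.injective huv)
  · exact (le_antisymm hu (not_lt.1 hub)).trans (le_antisymm hv (not_lt.1 hvb)).symm

theorem IsDistinguisher.insert_image_succAbove {X Z : Type} {d : ℕ} {R : Set (Fin d → Z)}
    {I : Set (Fin d)} (hR : IsDistinguisher R I) {Q : Set (Fin (d + 1) → X)} (m : Fin (d + 1))
    (f : X → X → Z) (hQR : ∀ x ∈ Q, (fun t => f (x m) (x (m.succAbove t))) ∈ R)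
    (hf : ∀ x ∈ Q, ∀ y ∈ Q, x m = y m → ∀ i, f (x m) (x i) = f (x m) (y i) → x i = y i) :
    IsDistinguisher Q (insert m (m.succAbove '' I)) := by
  intro x hx y hy hxy
  by_cases hm : x m = y m
  swap
  · exact ⟨m, mem_insert _ _, hm⟩
  have hcode : (fun t => f (x m) (x (m.succAbove t))) ≠ fun t => f (y m) (y (m.succAbove t)) := by
    refine fun h => hxy (funext fun i => ?_)
    obtain rfl | ⟨t, rfl⟩ := Fin.eq_self_or_eq_succAbove m i
    · exact hm
    · exact hf x hx y hy hm _ (hm ▸ congrFun h t)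
  obtain ⟨t, ht, hne⟩ := hR _ (hQR x hx) _ (hQR y hy) hcode
  exact ⟨m.succAbove t, mem_insert_of_mem _ (mem_image_of_mem _ ht), fun h => hne (by rw [h, hm])⟩

/-- Embed `X` into the initial ordinal of `#L⁺`, colour a point by the position `m` of its
largest coordinate `β` together with the colour of its remaining coordinates, coded injectively
below `β` by elements of `Option L`. -/
theorem exists_isDistinguishedColoring_succ {L X C : Type} {d n : ℕ} (hX : #X ≤ Order.succ #L)
    {ψ : (Fin d → Option L) → C} (hψ : IsDistinguishedColoring ψ n) :
    ∃ φ : (Fin (d + 1) → X) → Fin (d + 1) × C, IsDistinguishedColoring φ (n + 1) := by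
  obtain ⟨ι⟩ : Nonempty (X ↪ (Order.succ #L).ord.ToType) := by rwa [← le_def, mk_ord_toType]
  choose E hE using fun β : (Order.succ #L).ord.ToType =>
    exists_injOn_Iic β (Order.lt_succ_iff.1 (by simpa using mk_Iio_lt β))
  choose M hM using fun x : Fin (d + 1) → X => Finite.exists_max (ι ∘ x)
  refine ⟨fun x => (M x, ψ fun t => E (ι (x (M x))) (ι (x ((M x).succAbove t)))), ?_⟩
  rintro ⟨m, c⟩
  obtain ⟨I, hIn, hI⟩ := hψ c
  refine ⟨insert m (m.succAbove '' I), ?_, hI.insert_image_succAbove m (fun u v => E (ι u) (ι v))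
    (fun x hx => ?_) fun x hx y hy hxy i h => ι.injective (hE _ ?_ ?_ h)⟩
  · calc (insert m (m.succAbove '' I)).ncard ≤ (m.succAbove '' I).ncard + 1 := ncard_insert_le _ _
      _ ≤ n + 1 := by have := ncard_image_le (f := m.succAbove) (toFinite I); omega
  · simp only [mem_preimage, mem_singleton_iff, Prod.mk.injEq] at hx
    obtain ⟨rfl, hc⟩ := hx
    exact hc
  · simp only [mem_preimage, mem_singleton_iff, Prod.mk.injEq] at hx hy
    obtain ⟨rfl, -⟩ := hx
    exact hM x i
  · simp only [mem_preimage, mem_singleton_iff, Prod.mk.injEq] at hx hy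
    rw [hxy, ← hy.1]
    exact hM y i

theorem exists_isDistinguishedColoring {μ : Cardinal} (hμ : ℵ₀ ≤ μ) (n : ℕ) :
    ∀ (d : ℕ) {X : Type}, #X ≤ cardPlus μ n →
      ∃ (C : Type) (φ : (Fin d → X) → C), #C ≤ μ ∧ IsDistinguishedColoring φ n := by
  induction n with
  | zero =>
    exact fun d X hX =>
      ⟨_, id, mk_arrow_le hμ hX, isDistinguishedColoring_of_injective injective_id 0⟩
  | succ n ih =>
    rintro (_ | d) X hX
    · exact ⟨_, id, by simpa using one_le_aleph0.trans hμ,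
        isDistinguishedColoring_of_injective injective_id _⟩
    have hL : #(Option (cardPlus μ n).out) = cardPlus μ n := by
      rw [mk_option, mk_out, add_one_eq (hμ.trans (le_cardPlus μ n))]
    obtain ⟨C, ψ, hC, hψ⟩ := ih d hL.le
    obtain ⟨φ, hφ⟩ :=
      exists_isDistinguishedColoring_succ (X := X) (by rwa [mk_out, ← cardPlus_succ]) hψ
    refine ⟨_, φ, ?_, hφ⟩
    rw [mk_prod, lift_id, lift_id]
    exact mul_le_of_le hμ ((lt_aleph0_of_finite _).le.trans hμ) hC

def IsMonochromaticGrid {ι A X C : Type} (c : (ι → X) → C) (I : Set ι) (g : ι → A → X) : Prop :=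
  (∀ i ∈ I, Injective (g i)) ∧ ∀ a b : ι → A, c (Pi.map g a) = c (Pi.map g b)

theorem isMonochromaticGrid_empty {ι A X C : Type} (c : (ι → X) → C) (x₀ : X) :
    IsMonochromaticGrid c ∅ fun (_ : ι) (_ : A) => x₀ :=
  ⟨fun _ h => h.elim, fun _ _ => rfl⟩

theorem isMonochromaticGrid_insert_update {ι A X C : Type} [DecidableEq ι] {c : (ι → X) → C}
    {I : Set ι} {g : ι → A → X} (hg : ∀ i ∈ I, Injective (g i)) (i₀ : ι) {s : A → X}
    (hs : Injective s) {col : (ι → A) → C} (hcol : ∀ a b, col a = col b)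
    (hc : ∀ a, c (update (Pi.map g a) i₀ (s (a i₀))) = col a) :
    IsMonochromaticGrid c (insert i₀ I) (update g i₀ s) := by
  have hmap (a : ι → A) : Pi.map (update g i₀ s) a = update (Pi.map g a) i₀ (s (a i₀)) := by
    funext i
    rcases eq_or_ne i i₀ with rfl | h <;> simp [*]
  refine ⟨fun i hi => ?_, fun a b => by rw [hmap, hmap, hc, hc, hcol]⟩
  rcases eq_or_ne i i₀ with rfl | h
  · simpa using hs
  · simpa [h] using hg i (hi.resolve_left h)

/-- With finitely many colours, fix `N` candidate values for the new coordinate, find a grid for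
the coloured tuple of the `N` resulting colourings, and keep `#A` of the `N` values whose
colourings agree on the grid. -/
theorem exists_isMonochromaticGrid_of_finite {ι A X : Type} [Finite ι] [Finite A] [Infinite X]
    (I : Set ι) : ∀ {C : Type} [Finite C] (c : (ι → X) → C),
      ∃ g : ι → A → X, IsMonochromaticGrid c I g := by
  classical
  induction I, I.toFinite using Set.Finite.induction_on with
  | empty => exact fun c => ⟨_, isMonochromaticGrid_empty c (Classical.arbitrary X)⟩
  | @insert i₀ I _ _ ih =>
    intro C _ c
    let N := Nat.card ((ι → A) → C) * Nat.card A + 1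
    let t : Fin N ↪ X := Fin.valEmbedding.trans (Infinite.natEmbedding X)
    obtain ⟨g, hg⟩ := ih fun x (j : Fin N) => c (update x i₀ (t j))
    obtain ⟨j₀, s, hs, hsj⟩ := exists_injective_fiber (A := A)
      (fun (j : Fin N) a => c (update (Pi.map g a) i₀ (t j))) (by
        simp only [← Nat.cast_card, Nat.card_fin]; norm_cast; exact Nat.lt_succ_self _)
    exact ⟨_, isMonochromaticGrid_insert_update hg.1 i₀ (t.injective.comp hs)
      (fun a b => congrFun (hg.2 a b) j₀) fun a => congrFun (hsj (a i₀)) a⟩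

/-- With infinitely many colours `κ`, solve the problem inside a fixed set `S` of size
`κ^{+|I|}` separately for every value `v` of the new coordinate; there are at most
`κ^{+|I|} < #X` possible answers, so `#A` values of `v` share one. -/
theorem exists_isMonochromaticGrid_of_aleph0_le {ι A C : Type} [Finite ι] [Finite A]
    (hC : ℵ₀ ≤ #C) (I : Set ι) : ∀ {X : Type}, cardPlus #C I.ncard ≤ #X →
      ∀ c : (ι → X) → C, ∃ g : ι → A → X, IsMonochromaticGrid c I g := by
  classical
  induction I, I.toFinite using Set.Finite.induction_on with
  | empty =>
    intro X hX c
    have : Infinite X := infinite_iff.2 (hC.trans ((le_cardPlus _ _).trans hX))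
    exact ⟨_, isMonochromaticGrid_empty c (Classical.arbitrary X)⟩
  | @insert i₀ I hi₀ hI ih =>
    intro X hX c
    set ρ := cardPlus #C I.ncard
    have hρ : ℵ₀ ≤ ρ := hC.trans (le_cardPlus _ _)
    rw [ncard_insert_of_notMem hi₀ hI, cardPlus_succ] at hX
    obtain ⟨S, hS⟩ := le_mk_iff_exists_set.1 ((Order.le_succ ρ).trans hX)
    choose G hG using fun v : X =>
      ih hS.ge fun y : ι → S => c (update (fun i => (y i : X)) i₀ v)
    let answer v := (G v, fun a : ι → A => c (update (fun i => (G v i (a i) : X)) i₀ v))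
    have hanswer : #((ι → A → S) × ((ι → A) → C)) ≤ ρ := by
      rw [mk_prod, lift_id, lift_id]
      exact mul_le_of_le hρ (mk_arrow_le hρ (mk_arrow_le hρ hS.le))
        (mk_arrow_le hρ (le_cardPlus _ _))
    obtain ⟨v₀, s, hs, hsv⟩ := exists_injective_fiber (A := A) answer <|
      (mul_le_of_le hρ hanswer ((lt_aleph0_of_finite A).le.trans hρ)).trans_lt
        ((Order.lt_succ_of_not_isMax (not_isMax ρ)).trans_le hX)
    refine ⟨_, isMonochromaticGrid_insert_update (g := fun i a => (G v₀ i a : X))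
      (fun i hi => Subtype.val_injective.comp ((hG v₀).1 i hi)) i₀ hs
      (col := (answer v₀).2) (hG v₀).2 fun a => ?_⟩
    have h := hsv (a i₀)
    simp only [answer, Prod.mk.injEq] at h
    rw [← h.1]
    exact congrFun h.2 a

theorem exists_isMonochromaticGrid {ι A C X : Type} [Finite ι] [Finite A] [Infinite X]
    (I : Set ι) (hCX : cardPlus #C I.ncard ≤ #X) (c : (ι → X) → C) :
    ∃ g : ι → A → X, IsMonochromaticGrid c I g := by
  rcases finite_or_infinite C with hC | hC
  · exact exists_isMonochromaticGrid_of_finite I c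
  · exact exists_isMonochromaticGrid_of_aleph0_le (infinite_iff.1 hC) I hCX c

/-- A monochromatic grid over the finitely many letters occurring in `P`, injective on the
coordinates of a distinguisher, carries a monochromatic homomorphic image of `P`. -/
theorem not_isProperColoring_multiTemplateEdges {d : ℕ} {α X C : Type}
    {𝓟 : Set (Set (Fin d → α))} {P : Set (Fin d → α)} (hP : P ∈ 𝓟) (hPfin : P.Finite)
    {I : Set (Fin d)} (hI : IsDistinguisher P I) [Infinite X]
    (hCX : cardPlus #C I.ncard ≤ #X) (φ : (Fin d → X) → C) :
    ¬ IsProperColoring (multiTemplateEdges X 𝓟) φ := by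
  classical
  let V := ⋃ p ∈ P, range p
  have hV : ∀ p ∈ P, ∀ i, p i ∈ V := fun p hp i => mem_biUnion hp (mem_range_self i)
  have : Finite V := (hPfin.biUnion fun p _ => finite_range p).to_subtype
  obtain ⟨g, hg⟩ := exists_isMonochromaticGrid (A := V) I hCX φ
  let G i a := if h : a ∈ V then g i ⟨a, h⟩ else Classical.arbitrary X
  have hG : ∀ p (hp : p ∈ P), Pi.map G p = Pi.map g fun i => ⟨p i, hV p hp i⟩ := fun p hp =>
    funext fun i => dif_pos (hV p hp i)
  have hinj : InjOn (Pi.map G) P := by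
    intro p hp q hq hpq
    by_contra hne
    obtain ⟨i, hi, hne⟩ := hI p hp q hq hne
    rw [hG p hp, hG q hq] at hpq
    exact hne (congrArg Subtype.val (hg.1 i hi (congrFun hpq i)))
  intro hφ
  obtain ⟨_, ⟨p, hp, rfl⟩, _, ⟨q, hq, rfl⟩, hne⟩ :=
    hφ _ ⟨P, hP, Pi.map G, hinj, rfl, fun _ _ _ _ i h => congrArg (G i) h⟩
  rw [hG p hp, hG q hq] at hne
  exact hne (hg.2 _ _)

/-- **Corollary 2.2.** If `𝓟` is a set of `d`-dimensional `k`-templates and `X` is infinite: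
if `𝓟 = ∅` then `χ(L(X^d, 𝓟)) = 1`, and if `𝓟 ≠ ∅` then `χ(L(X^d, 𝓟)) = |X|^{-(e − 1)}`
where `e = min {e(P) : P ∈ 𝓟}`. -/
theorem stmt_6 (d k : ℕ) (hk : 2 ≤ k) (α X : Type) [Infinite X]
    (𝓟 : Set (Set (Fin d → α))) (h𝓟 : ∀ P ∈ 𝓟, P.Finite ∧ P.ncard = k) :
    (𝓟 = ∅ → chrNum (multiTemplateEdges X 𝓟) = 1) ∧
    (𝓟 ≠ ∅ → chrNum (multiTemplateEdges X 𝓟) =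
      cardMinus (Cardinal.mk X) (sInf {m : ℕ | ∃ P ∈ 𝓟, eTemplate P = m} - 1)) := by
  refine ⟨fun h => ?_, fun hne => ?_⟩
  · subst h
    have hE : multiTemplateEdges (α := α) X (∅ : Set (Set (Fin d → α))) = ∅ := by
      simp [multiTemplateEdges]
    rw [hE, chrNum_empty]
  set e := sInf {m : ℕ | ∃ P ∈ 𝓟, eTemplate P = m}
  obtain ⟨P₀, hP₀, hP₀e⟩ : e ∈ {m : ℕ | ∃ P ∈ 𝓟, eTemplate P = m} :=
    Nat.sInf_mem (let ⟨P, hP⟩ := nonempty_iff_ne_empty.2 hne; ⟨_, P, hP, rfl⟩)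
  have he : 0 < e := hP₀e ▸ eTemplate_pos
    ((one_lt_ncard_iff_nontrivial_and_finite (s := P₀)).1 (by rw [(h𝓟 P₀ hP₀).2]; omega)).1
  have hX : ℵ₀ ≤ #X := aleph0_le_mk X
  obtain ⟨C, φ, hC, hφ⟩ := exists_isDistinguishedColoring (aleph0_le_cardMinus hX (e - 1)) (e - 1)
    d (le_cardPlus_cardMinus #X (e - 1))
  have hproper : IsProperColoring (multiTemplateEdges X 𝓟) φ :=
    hφ.isProperColoring fun P hP => by have : e ≤ eTemplate P := Nat.sInf_le ⟨P, hP, rfl⟩; omega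
  refine le_antisymm ((chrNum_le hproper).trans hC) (le_chrNum ⟨C, φ, hproper⟩ fun C' φ' hφ' => ?_)
  by_contra! hlt
  obtain ⟨I₀, hI₀, hI₀P⟩ := exists_isDistinguisher_ncard_eq_eTemplate P₀
  refine not_isProperColoring_multiTemplateEdges hP₀ (h𝓟 P₀ hP₀).1 hI₀P ?_ φ' hφ'
  rw [hI₀, hP₀e, ← Nat.sub_add_cancel he, cardPlus_succ]
  exact Order.succ_le_of_lt (cardPlus_lt_of_lt_cardMinus hlt)
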